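/- arXiv:2009.03146 — 3 statements merged into one kernel-verified Lean document; each statement's English description precedes it below -/
import Mathlib

section
/- Let w be a smooth solution of the 1-D wave equation w_{tt} = w_{xx} on (ℓ,L)×(T₀,T₁) with w(ℓ,t) = w(L,t) = 0 for T₀ < t < T₁. Then ∫_{T₀}^{T₁} |w_x(ℓ,t)|² dt ≤ ((T₁-T₀+2(L-ℓ))/(L-ℓ)) · ∫_ℓ^L (|w_t(x,T₀)|² + |w_x(x,T₀)|²) dx. -/
/-!
Write `u = ∂ₜw` and `v = ∂ₓw`. For a solution of `w_tt = w_xx`, a density `P` with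
`∂ₜP = ∂ₓQ + R` satisfies `d/dt ∫ₗᴸ P = Q(L, t) - Q(ℓ, t) + ∫ₗᴸ R`. For `P = u² + v²` one has `Q = 2uv` and
`R = 0`, and `u` vanishes at both ends, so the energy `E` is conserved. For the multiplier density
`P = (x - L) u v` one has `Q = (x - L)(u² + v²)/2` and `R = -(u² + v²)/2`; since `x - L` vanishes at
`x = L` and `u(ℓ, t) = 0`, this gives `F' = (L - ℓ)/2 · v(ℓ, t)² - E/2` for `F(t) = ∫ (x - L) u v`.
Integrating over `(T₀, T₁)` and using `|F| ≤ (L - ℓ)/2 · E` yields the bound.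
-/

open MeasureTheory Set Function intervalIntegral

namespace WaveEquation

noncomputable def partialFst (f : ℝ → ℝ → ℝ) (x t : ℝ) : ℝ := deriv (fun y => f y t) x

noncomputable def partialSnd (f : ℝ → ℝ → ℝ) (x t : ℝ) : ℝ := deriv (f x) t

section PartialDerivatives

variable {f : ℝ → ℝ → ℝ}

theorem partialFst_eq_fderiv (hf : Differentiable ℝ (uncurry f)) (x t : ℝ) :
    partialFst f x t = fderiv ℝ (uncurry f) (x, t) (1, 0) := by
  have h := (hf (x, t)).hasFDerivAt.comp_hasDerivAt x
    ((hasDerivAt_id x).prodMk (hasDerivAt_const x t))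
  exact h.deriv

theorem partialSnd_eq_fderiv (hf : Differentiable ℝ (uncurry f)) (x t : ℝ) :
    partialSnd f x t = fderiv ℝ (uncurry f) (x, t) (0, 1) := by
  have h := (hf (x, t)).hasFDerivAt.comp_hasDerivAt t
    ((hasDerivAt_const t x).prodMk (hasDerivAt_id t))
  exact h.deriv

theorem hasDerivAt_partialFst (hf : Differentiable ℝ (uncurry f)) (x t : ℝ) :
    HasDerivAt (fun y => f y t) (partialFst f x t) x := by
  rw [partialFst_eq_fderiv hf]
  exact (hf (x, t)).hasFDerivAt.comp_hasDerivAt x ((hasDerivAt_id x).prodMk (hasDerivAt_const x t))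

theorem hasDerivAt_partialSnd (hf : Differentiable ℝ (uncurry f)) (x t : ℝ) :
    HasDerivAt (f x) (partialSnd f x t) t := by
  rw [partialSnd_eq_fderiv hf]
  exact (hf (x, t)).hasFDerivAt.comp_hasDerivAt t ((hasDerivAt_const t x).prodMk (hasDerivAt_id t))

theorem uncurry_partialFst (hf : Differentiable ℝ (uncurry f)) :
    uncurry (partialFst f) = fun p => fderiv ℝ (uncurry f) p (1, 0) :=
  funext fun p => partialFst_eq_fderiv hf p.1 p.2

theorem uncurry_partialSnd (hf : Differentiable ℝ (uncurry f)) :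
    uncurry (partialSnd f) = fun p => fderiv ℝ (uncurry f) p (0, 1) :=
  funext fun p => partialSnd_eq_fderiv hf p.1 p.2

theorem partialFst_eq_of_hasDerivAt {x t f' : ℝ} (h : HasDerivAt (fun y => f y t) f' x) :
    partialFst f x t = f' :=
  h.deriv

theorem partialSnd_eq_of_hasDerivAt {x t f' : ℝ} (h : HasDerivAt (f x) f' t) :
    partialSnd f x t = f' :=
  h.deriv

theorem partialSnd_eq_zero_of_eventually {x t : ℝ} (h : ∀ᶠ s in nhds t, f x s = 0) :
    partialSnd f x t = 0 :=
  partialSnd_eq_of_hasDerivAt ((hasDerivAt_const t 0).congr_of_eventuallyEq h)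

theorem contDiff_partialFst {n m : WithTop ℕ∞} (hf : ContDiff ℝ n (uncurry f))
    (hmn : m + 1 ≤ n) : ContDiff ℝ m (uncurry (partialFst f)) := by
  rw [uncurry_partialFst (hf.differentiable (by rintro rfl; simp at hmn))]
  exact (hf.fderiv_right hmn).clm_apply contDiff_const

theorem contDiff_partialSnd {n m : WithTop ℕ∞} (hf : ContDiff ℝ n (uncurry f))
    (hmn : m + 1 ≤ n) : ContDiff ℝ m (uncurry (partialSnd f)) := by
  rw [uncurry_partialSnd (hf.differentiable (by rintro rfl; simp at hmn))]
  exact (hf.fderiv_right hmn).clm_apply contDiff_const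

theorem partialFst_partialSnd (hf : ContDiff ℝ 2 (uncurry f)) (x t : ℝ) :
    partialFst (partialSnd f) x t = partialSnd (partialFst f) x t := by
  have hd : Differentiable ℝ (uncurry f) := hf.differentiable (by norm_num)
  have hdd : Differentiable ℝ (fderiv ℝ (uncurry f)) :=
    (hf.fderiv_right (m := 1) (by norm_num)).differentiable (by norm_num)
  have hslice : ∀ e e' : ℝ × ℝ, fderiv ℝ (fun p => fderiv ℝ (uncurry f) p e) (x, t) e' =
      fderiv ℝ (fderiv ℝ (uncurry f)) (x, t) e' e := by
    intro e e'
    rw [fderiv_clm_apply (hdd _) (differentiableAt_const _)]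
    simp
  have hsymm := (hf.contDiffAt (x := (x, t))).isSymmSndFDerivAt (by simp)
  rw [partialFst_eq_fderiv ((contDiff_partialSnd (m := 1) hf (by norm_num)).differentiable
      one_ne_zero),
    partialSnd_eq_fderiv ((contDiff_partialFst (m := 1) hf (by norm_num)).differentiable
      one_ne_zero),
    uncurry_partialSnd hd, uncurry_partialFst hd, hslice, hslice, hsymm]

theorem hasDerivAt_intervalIntegral_of_contDiff (hf : ContDiff ℝ 1 (uncurry f)) (a b t : ℝ) :
    HasDerivAt (fun s => ∫ x in a..b, f x s) (∫ x in a..b, partialSnd f x t) t := by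
  have hft : Continuous (uncurry (partialSnd f)) :=
    (contDiff_partialSnd (m := 0) hf (by norm_num)).continuous
  obtain ⟨M, hM⟩ := (isCompact_uIcc.prod (isCompact_Icc (a := t - 1) (b := t + 1)))
    |>.exists_bound_of_continuousOn hft.continuousOn
  refine (hasDerivAt_integral_of_dominated_loc_of_deriv_le (bound := fun _ => M)
    (Metric.ball_mem_nhds t one_pos)
    (Filter.Eventually.of_forall fun s => (hf.continuous.uncurry_right s).aestronglyMeasurable)
    ((hf.continuous.uncurry_right t).intervalIntegrable a b)
    (hft.uncurry_right t).aestronglyMeasurable ?_ intervalIntegrable_const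
    (Filter.Eventually.of_forall fun x _ s _ =>
      hasDerivAt_partialSnd (hf.differentiable one_ne_zero) x s)).2
  refine Filter.Eventually.of_forall fun x hx s hs => hM (x, s) ⟨uIoc_subset_uIcc hx, ?_⟩
  rw [Real.ball_eq_Ioo] at hs
  exact Ioo_subset_Icc_self hs

end PartialDerivatives

theorem hasDerivAt_intervalIntegral_of_balance {P Q R : ℝ → ℝ → ℝ} {a b t : ℝ} (hab : a ≤ b)
    (hP : ContDiff ℝ 1 (uncurry P)) (hQ : ContDiff ℝ 1 (uncurry Q))
    (hbal : ∀ x ∈ Ioo a b, partialSnd P x t = partialFst Q x t + R x t) :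
    HasDerivAt (fun s => ∫ x in a..b, P x s) (Q b t - Q a t + ∫ x in a..b, R x t) t := by
  have hPt : Continuous (uncurry (partialSnd P)) :=
    (contDiff_partialSnd (m := 0) hP (by norm_num)).continuous
  have hQx : Continuous (uncurry (partialFst Q)) :=
    (contDiff_partialFst (m := 0) hQ (by norm_num)).continuous
  have hR : ∫ x in a..b, R x t = ∫ x in a..b, partialSnd P x t - partialFst Q x t :=
    integral_congr_Ioo_of_le hab fun x hx => by simp only [hbal x hx]; ring
  have hftc : ∫ x in a..b, partialFst Q x t = Q b t - Q a t :=
    integral_eq_sub_of_hasDerivAt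
      (fun x _ => hasDerivAt_partialFst (hQ.differentiable one_ne_zero) x t)
      ((hQx.uncurry_right t).intervalIntegrable a b)
  rw [hR, integral_sub ((hPt.uncurry_right t).intervalIntegrable a b)
    ((hQx.uncurry_right t).intervalIntegrable a b), hftc, add_sub_cancel]
  exact hasDerivAt_intervalIntegral_of_contDiff hP a b t

noncomputable def energy (w : ℝ → ℝ → ℝ) (a b t : ℝ) : ℝ :=
  ∫ x in a..b, partialSnd w x t ^ 2 + partialFst w x t ^ 2

noncomputable def multiplierIntegral (w : ℝ → ℝ → ℝ) (a b t : ℝ) : ℝ :=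
  ∫ x in a..b, (x - b) * (partialSnd w x t * partialFst w x t)

section MultiplierMethod

variable {w : ℝ → ℝ → ℝ} {a b t : ℝ}

theorem hasDerivAt_energy (hw : ContDiff ℝ 2 (uncurry w)) (hab : a ≤ b)
    (hwave : ∀ x ∈ Ioo a b, partialSnd (partialSnd w) x t = partialFst (partialFst w) x t)
    (ha : partialSnd w a t = 0) (hb : partialSnd w b t = 0) :
    HasDerivAt (energy w a b) 0 t := by
  have hu := contDiff_partialSnd (m := 1) hw (by norm_num)
  have hv := contDiff_partialFst (m := 1) hw (by norm_num)
  have hud := hu.differentiable one_ne_zero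
  have hvd := hv.differentiable one_ne_zero
  have hflux := hasDerivAt_intervalIntegral_of_balance (R := fun _ _ => 0)
    (P := fun x t => partialSnd w x t ^ 2 + partialFst w x t ^ 2)
    (Q := fun x t => 2 * (partialSnd w x t * partialFst w x t)) hab
    ((hu.pow 2).add (hv.pow 2)) (contDiff_const.mul (hu.mul hv)) fun x hx => by
      have hP := ((hasDerivAt_partialSnd hud x t).fun_pow 2).fun_add
        ((hasDerivAt_partialSnd hvd x t).fun_pow 2)
      have hQ := ((hasDerivAt_partialFst hud x t).fun_mul (hasDerivAt_partialFst hvd x t)).const_mul 2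
      rw [partialSnd_eq_of_hasDerivAt hP, partialFst_eq_of_hasDerivAt
        (f := fun x t => 2 * (partialSnd w x t * partialFst w x t)) hQ, hwave x hx,
        ← partialFst_partialSnd hw]
      ring
  unfold energy
  simpa [ha, hb] using hflux

theorem continuous_energy (hw : ContDiff ℝ 1 (uncurry w)) (a b : ℝ) :
    Continuous (energy w a b) := by
  have hu := (contDiff_partialSnd (m := 0) hw (by norm_num)).continuous
  have hv := (contDiff_partialFst (m := 0) hw (by norm_num)).continuous
  have h : Continuous (uncurry fun t x => partialSnd w x t ^ 2 + partialFst w x t ^ 2) :=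
    ((hu.pow 2).add (hv.pow 2)).comp continuous_swap
  exact continuous_parametric_intervalIntegral_of_continuous' h a b

theorem continuous_multiplierIntegral (hw : ContDiff ℝ 1 (uncurry w)) (a b : ℝ) :
    Continuous (multiplierIntegral w a b) := by
  have hu := (contDiff_partialSnd (m := 0) hw (by norm_num)).continuous
  have hv := (contDiff_partialFst (m := 0) hw (by norm_num)).continuous
  have h : Continuous (uncurry fun t x => (x - b) * (partialSnd w x t * partialFst w x t)) :=
    ((continuous_fst.sub continuous_const).mul (hu.mul hv)).comp continuous_swap
  exact continuous_parametric_intervalIntegral_of_continuous' h a b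

theorem energy_eq_of_mem_Icc (hw : ContDiff ℝ 2 (uncurry w)) (hab : a ≤ b) {T₀ T₁ : ℝ}
    (hwave : ∀ x ∈ Ioo a b, ∀ t ∈ Ioo T₀ T₁,
      partialSnd (partialSnd w) x t = partialFst (partialFst w) x t)
    (hbdry : ∀ t ∈ Ioo T₀ T₁, partialSnd w a t = 0 ∧ partialSnd w b t = 0)
    (ht : t ∈ Icc T₀ T₁) : energy w a b t = energy w a b T₀ := by
  have hftc := integral_eq_sub_of_hasDerivAt_of_le ht.1
    (continuous_energy (hw.of_le (by norm_num)) a b).continuousOn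
    (fun s hs => hasDerivAt_energy hw hab (fun x hx => hwave x hx s ⟨hs.1, hs.2.trans_le ht.2⟩)
      (hbdry s ⟨hs.1, hs.2.trans_le ht.2⟩).1 (hbdry s ⟨hs.1, hs.2.trans_le ht.2⟩).2)
    intervalIntegrable_const
  simp only [intervalIntegral.integral_const, smul_zero] at hftc
  linarith

theorem hasDerivAt_multiplierIntegral (hw : ContDiff ℝ 2 (uncurry w)) (hab : a ≤ b)
    (hwave : ∀ x ∈ Ioo a b, partialSnd (partialSnd w) x t = partialFst (partialFst w) x t)
    (ha : partialSnd w a t = 0) :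
    HasDerivAt (multiplierIntegral w a b)
      ((b - a) / 2 * partialFst w a t ^ 2 - energy w a b t / 2) t := by
  have hu := contDiff_partialSnd (m := 1) hw (by norm_num)
  have hv := contDiff_partialFst (m := 1) hw (by norm_num)
  have hud := hu.differentiable one_ne_zero
  have hvd := hv.differentiable one_ne_zero
  have hflux := hasDerivAt_intervalIntegral_of_balance
    (P := fun x t => (x - b) * (partialSnd w x t * partialFst w x t))
    (Q := fun x t => (x - b) * (partialSnd w x t ^ 2 + partialFst w x t ^ 2) / 2)
    (R := fun x t => -((partialSnd w x t ^ 2 + partialFst w x t ^ 2) / 2)) hab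
    ((contDiff_fst.sub contDiff_const).mul (hu.mul hv))
    (((contDiff_fst.sub contDiff_const).mul ((hu.pow 2).add (hv.pow 2))).div_const 2)
    fun x hx => by
      have hP := ((hasDerivAt_partialSnd hud x t).fun_mul
        (hasDerivAt_partialSnd hvd x t)).const_mul (x - b)
      have hQ := ((((hasDerivAt_id' x).sub_const b).fun_mul
        (((hasDerivAt_partialFst hud x t).fun_pow 2).fun_add
          ((hasDerivAt_partialFst hvd x t).fun_pow 2))).div_const 2)
      rw [partialSnd_eq_of_hasDerivAt hP, partialFst_eq_of_hasDerivAt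
        (f := fun x t => (x - b) * (partialSnd w x t ^ 2 + partialFst w x t ^ 2) / 2) hQ,
        hwave x hx, ← partialFst_partialSnd hw]
      ring
  unfold multiplierIntegral
  convert hflux using 1
  rw [intervalIntegral.integral_neg, intervalIntegral.integral_div, ha, energy]
  ring

theorem abs_multiplierIntegral_le (hw : ContDiff ℝ 1 (uncurry w)) (hab : a ≤ b) (t : ℝ) :
    |multiplierIntegral w a b t| ≤ (b - a) / 2 * energy w a b t := by
  have hu := (contDiff_partialSnd (m := 0) hw (by norm_num)).continuous.uncurry_right t
  have hv := (contDiff_partialFst (m := 0) hw (by norm_num)).continuous.uncurry_right t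
  rw [energy, ← intervalIntegral.integral_const_mul]
  refine (abs_integral_le_integral_abs hab).trans (integral_mono_on hab
    (((continuous_id.sub continuous_const).mul (hu.mul hv)).abs.intervalIntegrable a b)
    ((continuous_const.mul ((hu.pow 2).add (hv.pow 2))).intervalIntegrable a b) fun x hx => ?_)
  have hxb : |x - b| ≤ b - a := abs_le.2 ⟨by linarith [hx.1], by linarith [hx.2]⟩
  have hamgm : |partialSnd w x t * partialFst w x t| ≤
      (partialSnd w x t ^ 2 + partialFst w x t ^ 2) / 2 := by
    rw [abs_le]; constructor <;> nlinarith [sq_nonneg (partialSnd w x t + partialFst w x t),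
      sq_nonneg (partialSnd w x t - partialFst w x t)]
  rw [abs_mul]
  calc |x - b| * |partialSnd w x t * partialFst w x t|
      ≤ (b - a) * ((partialSnd w x t ^ 2 + partialFst w x t ^ 2) / 2) :=
        mul_le_mul hxb hamgm (abs_nonneg _) (by linarith [abs_nonneg (x - b)])
    _ = (b - a) / 2 * (partialSnd w x t ^ 2 + partialFst w x t ^ 2) := by ring

theorem multiplier_identity (hw : ContDiff ℝ 2 (uncurry w)) (hab : a ≤ b) {T₀ T₁ : ℝ}
    (hT : T₀ ≤ T₁)
    (hwave : ∀ x ∈ Ioo a b, ∀ t ∈ Ioo T₀ T₁,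
      partialSnd (partialSnd w) x t = partialFst (partialFst w) x t)
    (hbdry : ∀ t ∈ Ioo T₀ T₁, partialSnd w a t = 0 ∧ partialSnd w b t = 0) :
    (b - a) / 2 * ∫ t in T₀..T₁, partialFst w a t ^ 2 =
      multiplierIntegral w a b T₁ - multiplierIntegral w a b T₀ +
        (T₁ - T₀) * energy w a b T₀ / 2 := by
  have hv := (contDiff_partialFst (m := 0) hw (by norm_num)).continuous.uncurry_left a
  have hflux : Continuous fun t => (b - a) / 2 * partialFst w a t ^ 2 := by fun_prop
  have hftc := integral_eq_sub_of_hasDerivAt_of_le hT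
    (f' := fun t => (b - a) / 2 * partialFst w a t ^ 2 - energy w a b T₀ / 2)
    (continuous_multiplierIntegral (hw.of_le (by norm_num)) a b).continuousOn
    (fun t ht => by
      simpa only [energy_eq_of_mem_Icc hw hab hwave hbdry (Ioo_subset_Icc_self ht)] using
        hasDerivAt_multiplierIntegral hw hab (fun x hx => hwave x hx t ht) (hbdry t ht).1)
    ((hflux.sub continuous_const).intervalIntegrable T₀ T₁)
  rw [intervalIntegral.integral_sub (hflux.intervalIntegrable _ _)
    intervalIntegrable_const, intervalIntegral.integral_const_mul,
    intervalIntegral.integral_const, smul_eq_mul] at hftc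
  linarith

end MultiplierMethod

end WaveEquation

open WaveEquation in
/-- Direct (hidden regularity) inequality for the 1-D wave equation (Lemma 3.1):
if `w` solves `w_{tt} = w_{xx}` on `(ℓ,L) × (T₀,T₁)` with `w(ℓ,·) = w(L,·) = 0`, then
the boundary flux at `x = ℓ` is controlled by the energy at time `T₀`. -/
theorem stmt_10 (ℓ L T₀ T₁ : ℝ) (hℓL : ℓ < L) (hT : T₀ < T₁)
    (w : ℝ → ℝ → ℝ) (hreg : ContDiff ℝ 2 (Function.uncurry w))
    (heq : ∀ x t : ℝ, ℓ < x → x < L → T₀ < t → t < T₁ →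
      deriv (fun τ => deriv (fun τ' => w x τ') τ) t =
      deriv (fun y => deriv (fun y' => w y' t) y) x)
    (hbc : ∀ t : ℝ, T₀ < t → t < T₁ → w ℓ t = 0 ∧ w L t = 0) :
    (∫ t in T₀..T₁, (deriv (fun y => w y t) ℓ) ^ 2) ≤
      (T₁ - T₀ + 2 * (L - ℓ)) / (L - ℓ) *
        ∫ x in ℓ..L,
          ((deriv (fun τ => w x τ) T₀) ^ 2 + (deriv (fun y => w y T₀) x) ^ 2) := by
  have hwave : ∀ x ∈ Ioo ℓ L, ∀ t ∈ Ioo T₀ T₁,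
      partialSnd (partialSnd w) x t = partialFst (partialFst w) x t :=
    fun x hx t ht => heq x t hx.1 hx.2 ht.1 ht.2
  have hbdry : ∀ t ∈ Ioo T₀ T₁, partialSnd w ℓ t = 0 ∧ partialSnd w L t = 0 := fun t ht =>
    ⟨partialSnd_eq_zero_of_eventually (Filter.eventually_of_mem (Ioo_mem_nhds ht.1 ht.2)
      fun s hs => (hbc s hs.1 hs.2).1),
    partialSnd_eq_zero_of_eventually (Filter.eventually_of_mem (Ioo_mem_nhds ht.1 ht.2)
      fun s hs => (hbc s hs.1 hs.2).2)⟩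
  have hid := multiplier_identity hreg hℓL.le hT.le hwave hbdry
  have hF₁ := abs_le.1 (abs_multiplierIntegral_le (hreg.of_le (by norm_num)) hℓL.le T₁)
  have hF₀ := abs_le.1 (abs_multiplierIntegral_le (hreg.of_le (by norm_num)) hℓL.le T₀)
  rw [energy_eq_of_mem_Icc hreg hℓL.le hwave hbdry (right_mem_Icc.2 hT.le)] at hF₁
  change (∫ t in T₀..T₁, partialFst w ℓ t ^ 2) ≤ _ * energy w ℓ L T₀
  rw [div_mul_eq_mul_div, le_div_iff₀ (sub_pos.2 hℓL)]
  linarith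
end

section
/- Assume 0 < ℓ₀ ≤ ℓ ≤ L ≤ ℓ₁, T > 4ℓ₁, and suppose u^L solves the wave equation u_{tt} = u_{xx} on (ℓ,L)×(ℓ,T-ℓ) with u^L(ℓ,t) = u^L(L,t) = 0 and energy bounded by M. If for some t ∈ [2ℓ, T-2ℓ] one has |u^L(0,t)| ≥ δ₀ where u^L(0,t) = -(1/2)∫_{t-ℓ}^{t+ℓ} u^L_x(ℓ,s) ds, then L - ℓ ≤ (ℓ₁/2)·(T + 2ℓ₁ - 4ℓ₀)·M/δ₀². -/
/-!
For solutions of `u_tt = u_xx` with `u_t(ℓ, ·) = 0`, the multiplier `(L - x) u_x`, whose weight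
vanishes at `x = L`, gives the identity
`d/ds ∫_ℓ^L (L - x) u_t u_x dx = ½ ∫_ℓ^L (u_t² + u_x²) dx - ½ (L - ℓ) u_x(ℓ, s)²`.
Integrating it over `[a, b]` and bounding `|∫_ℓ^L (L - x) u_t u_x dx| ≤ (L - ℓ) M / 2` yields the
direct inequality `(L - ℓ) ∫_a^b u_x(ℓ, s)² ds ≤ (b - a + 2 (L - ℓ)) M`. On the other hand,
Cauchy–Schwarz in d'Alembert's formula gives `δ₀² ≤ u(0, t)² ≤ (ℓ / 2) ∫_{t-ℓ}^{t+ℓ} u_x(ℓ, s)² ds`,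
and the direct inequality on `[ℓ, T - ℓ] ⊇ [t - ℓ, t + ℓ]` bounds the right-hand side.
-/

open MeasureTheory Set

-- The first coordinate is space `x`, the second time `t`.
noncomputable def partialFst (f : ℝ × ℝ → ℝ) (p : ℝ × ℝ) : ℝ := fderiv ℝ f p (1, 0)

noncomputable def partialSnd (f : ℝ × ℝ → ℝ) (p : ℝ × ℝ) : ℝ := fderiv ℝ f p (0, 1)

local notation "∂₁" => partialFst
local notation "∂₂" => partialSnd

section PartialDerivatives

variable {f : ℝ × ℝ → ℝ} {x s : ℝ}

theorem hasDerivAt_partialFst (hf : DifferentiableAt ℝ f (x, s)) :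
    HasDerivAt (fun y => f (y, s)) (∂₁ f (x, s)) x :=
  hf.hasFDerivAt.comp_hasDerivAt x ((hasDerivAt_id x).prodMk (hasDerivAt_const x s))

theorem hasDerivAt_partialSnd (hf : DifferentiableAt ℝ f (x, s)) :
    HasDerivAt (fun τ => f (x, τ)) (∂₂ f (x, s)) s :=
  hf.hasFDerivAt.comp_hasDerivAt s ((hasDerivAt_const s x).prodMk (hasDerivAt_id s))

theorem ContDiff.partialFst {m n : WithTop ℕ∞} (hf : ContDiff ℝ n f) (hmn : m + 1 ≤ n) :
    ContDiff ℝ m (∂₁ f) :=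
  (ContinuousLinearMap.apply ℝ ℝ ((1, 0) : ℝ × ℝ)).contDiff.comp (hf.fderiv_right hmn)

theorem ContDiff.partialSnd {m n : WithTop ℕ∞} (hf : ContDiff ℝ n f) (hmn : m + 1 ≤ n) :
    ContDiff ℝ m (∂₂ f) :=
  (ContinuousLinearMap.apply ℝ ℝ ((0, 1) : ℝ × ℝ)).contDiff.comp (hf.fderiv_right hmn)

theorem ContDiff.continuous_partialFst (hf : ContDiff ℝ 1 f) : Continuous (∂₁ f) :=
  (hf.partialFst (zero_add 1).le).continuous

theorem ContDiff.continuous_partialSnd (hf : ContDiff ℝ 1 f) : Continuous (∂₂ f) :=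
  (hf.partialSnd (zero_add 1).le).continuous

theorem partialSnd_eq_zero_of_eqOn_zero {a b : ℝ} (hf : DifferentiableAt ℝ f (x, s))
    (hs : s ∈ Ioo a b) (h : EqOn (fun τ => f (x, τ)) 0 (Ioo a b)) : ∂₂ f (x, s) = 0 := by
  have hzero : (fun τ => f (x, τ)) =ᶠ[nhds s] fun _ => 0 :=
    Filter.eventually_of_mem (Ioo_mem_nhds hs.1 hs.2) h
  exact (hasDerivAt_partialSnd hf).unique ((hasDerivAt_const s 0).congr_of_eventuallyEq hzero)

theorem partialFst_partialSnd_comm (hf : ContDiff ℝ 2 f) (p : ℝ × ℝ) :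
    ∂₁ (∂₂ f) p = ∂₂ (∂₁ f) p := by
  have hdf : DifferentiableAt ℝ (fderiv ℝ f) p :=
    ((hf.fderiv_right (m := 1) le_rfl).differentiable one_ne_zero).differentiableAt
  have happly (v : ℝ × ℝ) : fderiv ℝ (fun q => fderiv ℝ f q v) p =
      (ContinuousLinearMap.apply ℝ ℝ v).comp (fderiv ℝ (fderiv ℝ f) p) :=
    ((ContinuousLinearMap.apply ℝ ℝ v).hasFDerivAt.comp p hdf.hasFDerivAt).fderiv
  change fderiv ℝ (fun q => fderiv ℝ f q (0, 1)) p (1, 0)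
    = fderiv ℝ (fun q => fderiv ℝ f q (1, 0)) p (0, 1)
  rw [happly, happly]
  exact (hf.contDiffAt.isSymmSndFDerivAt (by simp) _ _).symm

theorem deriv_deriv_fst (hf : ContDiff ℝ 2 f) :
    deriv (fun y => deriv (fun y' => f (y', s)) y) x = ∂₁ (∂₁ f) (x, s) := by
  have hf1 : ContDiff ℝ 1 (∂₁ f) := hf.partialFst one_add_one_eq_two.le
  simp_rw [(hasDerivAt_partialFst (hf.differentiable two_ne_zero _)).deriv]
  exact (hasDerivAt_partialFst (hf1.differentiable one_ne_zero _)).deriv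

theorem deriv_deriv_snd (hf : ContDiff ℝ 2 f) :
    deriv (fun τ => deriv (fun τ' => f (x, τ')) τ) s = ∂₂ (∂₂ f) (x, s) := by
  have hf1 : ContDiff ℝ 1 (∂₂ f) := hf.partialSnd one_add_one_eq_two.le
  simp_rw [(hasDerivAt_partialSnd (hf.differentiable two_ne_zero _)).deriv]
  exact (hasDerivAt_partialSnd (hf1.differentiable one_ne_zero _)).deriv

end PartialDerivatives

theorem integral_sub_eq_integral_integral_of_hasDerivAt {F F' : ℝ → ℝ → ℝ} {ℓ L a b : ℝ}
    (hF : ∀ x ∈ uIcc ℓ L, ∀ s ∈ uIcc a b, HasDerivAt (F x) (F' x s) s)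
    (hF' : ContinuousOn (Function.uncurry F') (uIcc ℓ L ×ˢ uIcc a b)) :
    ∫ x in ℓ..L, (F x b - F x a) = ∫ s in a..b, ∫ x in ℓ..L, F' x s := by
  rw [← intervalIntegral_intervalIntegral_swap]
  · refine intervalIntegral.integral_congr fun x hx => ?_
    have hslice : ContinuousOn (F' x) (uIcc a b) :=
      hF'.comp (Continuous.prodMk_right x).continuousOn fun s hs => ⟨hx, hs⟩
    exact (intervalIntegral.integral_eq_sub_of_hasDerivAt (hF x hx)
      (hslice.intervalIntegrable)).symm
  · exact (hF'.integrableOn_compact (isCompact_uIcc.prod isCompact_uIcc)).mono_set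
      (prod_mono uIoc_subset_uIcc uIoc_subset_uIcc)

theorem integral_sub_mul_eq_of_hasDerivAt {e e' : ℝ → ℝ} {ℓ L : ℝ}
    (he : ∀ x ∈ uIcc ℓ L, HasDerivAt e (e' x) x) (he' : IntervalIntegrable e' volume ℓ L) :
    ∫ x in ℓ..L, (L - x) * e' x = -((L - ℓ) * e ℓ) + ∫ x in ℓ..L, e x := by
  have hsub : ∀ x ∈ uIcc ℓ L, HasDerivAt (fun y => L - y) (-1) x := fun x _ =>
    (hasDerivAt_id x).const_sub L
  rw [intervalIntegral.integral_mul_deriv_eq_deriv_mul hsub he intervalIntegrable_const he']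
  simp

theorem sq_integral_le_mul_integral_sq {g : ℝ → ℝ} {a b : ℝ} (hab : a ≤ b)
    (hg : IntervalIntegrable g volume a b)
    (hg2 : IntervalIntegrable (fun s => g s ^ 2) volume a b) :
    (∫ s in a..b, g s) ^ 2 ≤ (b - a) * ∫ s in a..b, g s ^ 2 := by
  have hquad (c : ℝ) : 0 ≤ (b - a) * (c * c) + (-2 * ∫ s in a..b, g s) * c
      + ∫ s in a..b, g s ^ 2 := by
    have hexp : ∫ s in a..b, (g s - c) ^ 2 = (b - a) * (c * c) + (-2 * ∫ s in a..b, g s) * c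
        + ∫ s in a..b, g s ^ 2 := by
      have : ∀ s, (g s - c) ^ 2 = g s ^ 2 - 2 * c * g s + c * c := fun s => by ring
      simp only [this]
      rw [intervalIntegral.integral_add (hg2.sub (hg.const_mul _)) intervalIntegrable_const,
        intervalIntegral.integral_sub hg2 (hg.const_mul _), intervalIntegral.integral_const_mul,
        intervalIntegral.integral_const, smul_eq_mul]
      ring
    rw [← hexp]
    exact intervalIntegral.integral_nonneg hab fun s _ => sq_nonneg _
  have := discrim_le_zero hquad
  rw [discrim] at this
  linarith

theorem sq_le_of_eq_neg_half_integral {g : ℝ → ℝ} (hg : Continuous g) {c ℓ v : ℝ} (hℓ : 0 ≤ ℓ)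
    (hv : v = -(1 / 2) * ∫ s in (c - ℓ)..(c + ℓ), g s) :
    v ^ 2 ≤ ℓ / 2 * ∫ s in (c - ℓ)..(c + ℓ), g s ^ 2 := by
  calc v ^ 2 = (∫ s in (c - ℓ)..(c + ℓ), g s) ^ 2 / 4 := by rw [hv]; ring
    _ ≤ (c + ℓ - (c - ℓ)) * (∫ s in (c - ℓ)..(c + ℓ), g s ^ 2) / 4 := by
      gcongr
      exact sq_integral_le_mul_integral_sq (by linarith) (hg.intervalIntegrable _ _)
        ((hg.pow 2).intervalIntegrable _ _)
    _ = ℓ / 2 * ∫ s in (c - ℓ)..(c + ℓ), g s ^ 2 := by ring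

noncomputable def energy (U : ℝ × ℝ → ℝ) (ℓ L s : ℝ) : ℝ :=
  ∫ x in ℓ..L, (∂₂ U (x, s) ^ 2 + ∂₁ U (x, s) ^ 2)

noncomputable def multiplierFlux (U : ℝ × ℝ → ℝ) (ℓ L s : ℝ) : ℝ :=
  ∫ x in ℓ..L, (L - x) * (∂₂ U (x, s) * ∂₁ U (x, s))

section Wave

variable {U : ℝ × ℝ → ℝ} {ℓ L : ℝ}

theorem energy_nonneg (hℓL : ℓ ≤ L) (s : ℝ) : 0 ≤ energy U ℓ L s :=
  intervalIntegral.integral_nonneg hℓL fun _ _ => by positivity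

theorem continuous_energy (hU : ContDiff ℝ 1 U) : Continuous (energy U ℓ L) := by
  have h₁ : Continuous (∂₁ U) := hU.continuous_partialFst
  have h₂ : Continuous (∂₂ U) := hU.continuous_partialSnd
  exact intervalIntegral.continuous_parametric_intervalIntegral_of_continuous' (by fun_prop) _ _

theorem abs_multiplierFlux_le (hU : ContDiff ℝ 1 U) (hℓL : ℓ ≤ L) (s : ℝ) :
    |multiplierFlux U ℓ L s| ≤ (L - ℓ) / 2 * energy U ℓ L s := by
  have h₁ : Continuous (∂₁ U) := hU.continuous_partialFst
  have h₂ : Continuous (∂₂ U) := hU.continuous_partialSnd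
  rw [energy, ← intervalIntegral.integral_const_mul]
  refine (intervalIntegral.abs_integral_le_integral_abs hℓL).trans <|
    intervalIntegral.integral_mono_on hℓL (Continuous.intervalIntegrable (by fun_prop) _ _)
      (Continuous.intervalIntegrable (by fun_prop) _ _) fun x hx => ?_
  have hweight : |L - x| ≤ L - ℓ := by rw [abs_of_nonneg (by linarith [hx.2])]; linarith [hx.1]
  have hamgm : |∂₂ U (x, s) * ∂₁ U (x, s)| ≤ (∂₂ U (x, s) ^ 2 + ∂₁ U (x, s) ^ 2) / 2 := by
    rw [abs_mul, ← sq_abs (∂₂ U (x, s)), ← sq_abs (∂₁ U (x, s))]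
    linarith [two_mul_le_add_sq |∂₂ U (x, s)| |∂₁ U (x, s)|]
  calc |(L - x) * (∂₂ U (x, s) * ∂₁ U (x, s))|
      ≤ (L - ℓ) * ((∂₂ U (x, s) ^ 2 + ∂₁ U (x, s) ^ 2) / 2) := by
        rw [abs_mul]; exact mul_le_mul hweight hamgm (abs_nonneg _) (by linarith)
    _ = (L - ℓ) / 2 * (∂₂ U (x, s) ^ 2 + ∂₁ U (x, s) ^ 2) := by ring

theorem multiplierFlux_sub_multiplierFlux (hU : ContDiff ℝ 2 U) (hℓL : ℓ ≤ L) {a b : ℝ}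
    (hab : a ≤ b)
    (hwave : ∀ x ∈ Ioo ℓ L, ∀ s ∈ Ioo a b, ∂₂ (∂₂ U) (x, s) = ∂₁ (∂₁ U) (x, s))
    (hut : ∀ s ∈ Ioo a b, ∂₂ U (ℓ, s) = 0) :
    multiplierFlux U ℓ L b - multiplierFlux U ℓ L a
      = ∫ s in a..b, (energy U ℓ L s - (L - ℓ) * ∂₁ U (ℓ, s) ^ 2) / 2 := by
  have hU1 : ContDiff ℝ 1 U := hU.of_le one_le_two
  have h₁ : ContDiff ℝ 1 (∂₁ U) := hU.partialFst one_add_one_eq_two.le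
  have h₂ : ContDiff ℝ 1 (∂₂ U) := hU.partialSnd one_add_one_eq_two.le
  have c₁ := hU1.continuous_partialFst
  have c₂ := hU1.continuous_partialSnd
  have c₁₁ := h₁.continuous_partialFst
  have c₂₁ := h₁.continuous_partialSnd
  have c₁₂ := h₂.continuous_partialFst
  have c₂₂ := h₂.continuous_partialSnd
  have hdiff (g : ℝ × ℝ → ℝ) (hg : ContDiff ℝ 1 g) (p : ℝ × ℝ) : DifferentiableAt ℝ g p :=
    (hg.differentiable one_ne_zero) p
  have htime : multiplierFlux U ℓ L b - multiplierFlux U ℓ L a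
      = ∫ s in a..b, ∫ x in ℓ..L, (L - x) *
          (∂₂ (∂₂ U) (x, s) * ∂₁ U (x, s) + ∂₂ U (x, s) * ∂₂ (∂₁ U) (x, s)) := by
    rw [multiplierFlux, multiplierFlux, ← intervalIntegral.integral_sub
      (Continuous.intervalIntegrable (by fun_prop) _ _)
      (Continuous.intervalIntegrable (by fun_prop) _ _)]
    refine integral_sub_eq_integral_integral_of_hasDerivAt (fun x _ s _ => ?_)
      (F := fun x s => (L - x) * (∂₂ U (x, s) * ∂₁ U (x, s)))
      (F' := fun x s => (L - x) *
        (∂₂ (∂₂ U) (x, s) * ∂₁ U (x, s) + ∂₂ U (x, s) * ∂₂ (∂₁ U) (x, s)))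
      (Continuous.continuousOn (by fun_prop))
    exact ((hasDerivAt_partialSnd (hdiff _ h₂ _)).mul
      (hasDerivAt_partialSnd (hdiff _ h₁ _))).const_mul (L - x)
  have hspace : ∀ s ∈ Ioo a b, ∫ x in ℓ..L, (L - x) *
        (∂₂ (∂₂ U) (x, s) * ∂₁ U (x, s) + ∂₂ U (x, s) * ∂₂ (∂₁ U) (x, s))
      = (energy U ℓ L s - (L - ℓ) * ∂₁ U (ℓ, s) ^ 2) / 2 := by
    intro s hs
    have hhalf : ∫ x in ℓ..L, (∂₂ U (x, s) ^ 2 + ∂₁ U (x, s) ^ 2) / 2 = energy U ℓ L s / 2 :=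
      intervalIntegral.integral_div _ _
    rw [intervalIntegral.integral_congr_Ioo_of_le hℓL (g := fun x => (L - x) *
      (∂₂ U (x, s) * ∂₁ (∂₂ U) (x, s) + ∂₁ U (x, s) * ∂₁ (∂₁ U) (x, s)))]
    · rw [integral_sub_mul_eq_of_hasDerivAt
        (e := fun x => (∂₂ U (x, s) ^ 2 + ∂₁ U (x, s) ^ 2) / 2) (fun x _ => ?_)
        (Continuous.intervalIntegrable (by fun_prop) _ _), hhalf, hut s hs]
      · rw [zero_pow two_ne_zero, zero_add]
        ring
      · refine ((((hasDerivAt_partialFst (hdiff _ h₂ _)).pow 2).add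
          ((hasDerivAt_partialFst (hdiff _ h₁ _)).pow 2)).div_const 2).congr_deriv ?_
        ring
    · intro x hx
      simp only [hwave x hx s hs, partialFst_partialSnd_comm hU]
      ring
  rw [htime, intervalIntegral.integral_congr_Ioo_of_le hab hspace]

theorem direct_inequality (hU : ContDiff ℝ 2 U) (hℓL : ℓ ≤ L) {a b M : ℝ} (hab : a ≤ b)
    (hwave : ∀ x ∈ Ioo ℓ L, ∀ s ∈ Ioo a b, ∂₂ (∂₂ U) (x, s) = ∂₁ (∂₁ U) (x, s))
    (hut : ∀ s ∈ Ioo a b, ∂₂ U (ℓ, s) = 0) (hM : ∀ s ∈ Icc a b, energy U ℓ L s ≤ M) :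
    (L - ℓ) * ∫ s in a..b, ∂₁ U (ℓ, s) ^ 2 ≤ (b - a) * M + 2 * (L - ℓ) * M := by
  have hU1 : ContDiff ℝ 1 U := hU.of_le one_le_two
  have c₁ := hU1.continuous_partialFst
  have hidentity := multiplierFlux_sub_multiplierFlux hU hℓL hab hwave hut
  rw [intervalIntegral.integral_div, intervalIntegral.integral_sub
    ((continuous_energy hU1).intervalIntegrable _ _)
    (Continuous.intervalIntegrable (by fun_prop) _ _), intervalIntegral.integral_const_mul]
    at hidentity
  have henergy : ∫ s in a..b, energy U ℓ L s ≤ (b - a) * M := by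
    simpa using intervalIntegral.integral_mono_on hab
      ((continuous_energy hU1).intervalIntegrable _ _) (intervalIntegrable_const (μ := volume)) hM
  have hflux (s : ℝ) (hs : s ∈ Icc a b) : |multiplierFlux U ℓ L s| ≤ (L - ℓ) / 2 * M :=
    (abs_multiplierFlux_le hU1 hℓL s).trans
      (mul_le_mul_of_nonneg_left (hM s hs) (by linarith))
  have hfa := abs_le.1 (hflux a (left_mem_Icc.2 hab))
  have hfb := abs_le.1 (hflux b (right_mem_Icc.2 hab))
  linarith

end Wave

theorem stmt_13_general (ℓ₀ ℓ L ℓ₁ T M δ₀ : ℝ)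
    (h₀ : 0 < ℓ₀) (h₁ : ℓ₀ ≤ ℓ) (h₂ : ℓ ≤ L) (h₃ : L ≤ ℓ₁)
    (hδ₀ : 0 < δ₀)
    (u : ℝ → ℝ → ℝ) (hreg : ContDiff ℝ 2 (Function.uncurry u))
    (heq : ∀ x t : ℝ, ℓ < x → x < L → ℓ < t → t < T - ℓ →
      deriv (fun τ => deriv (fun τ' => u x τ') τ) t =
      deriv (fun y => deriv (fun y' => u y' t) y) x)
    (hbc : ∀ t : ℝ, ℓ < t → t < T - ℓ → u ℓ t = 0 ∧ u L t = 0)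
    (henergy : ∀ t : ℝ, ℓ ≤ t → t ≤ T - ℓ →
      (∫ x in ℓ..L,
        ((deriv (fun τ => u x τ) t) ^ 2 + (deriv (fun y => u y t) x) ^ 2)) ≤ M)
    (t : ℝ) (ht₁ : 2 * ℓ ≤ t) (ht₂ : t ≤ T - 2 * ℓ)
    (hdalembert : u 0 t =
      -(1 / 2) * ∫ s in (t - ℓ)..(t + ℓ), deriv (fun y => u y s) ℓ)
    (hbig : δ₀ ≤ |u 0 t|) :
    L - ℓ ≤ ℓ₁ / 2 * (T + 2 * ℓ₁ - 4 * ℓ₀) * M / δ₀ ^ 2 := by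
  set U := Function.uncurry u
  have hℓ : 0 < ℓ := h₀.trans_le h₁
  have hdiff (p : ℝ × ℝ) : DifferentiableAt ℝ U p := hreg.differentiable two_ne_zero p
  have c₁ : Continuous (∂₁ U) := (hreg.of_le one_le_two).continuous_partialFst
  have hwave : ∀ x ∈ Ioo ℓ L, ∀ s ∈ Ioo ℓ (T - ℓ), ∂₂ (∂₂ U) (x, s) = ∂₁ (∂₁ U) (x, s) :=
    fun x hx s hs => (deriv_deriv_snd hreg).symm.trans
      ((heq x s hx.1 hx.2 hs.1 hs.2).trans (deriv_deriv_fst hreg))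
  have hut : ∀ s ∈ Ioo ℓ (T - ℓ), ∂₂ U (ℓ, s) = 0 := fun s hs =>
    partialSnd_eq_zero_of_eqOn_zero (hdiff _) hs fun τ hτ => (hbc τ hτ.1 hτ.2).1
  have hE : ∀ s ∈ Icc ℓ (T - ℓ), energy U ℓ L s ≤ M := fun s hs =>
    le_of_eq_of_le (intervalIntegral.integral_congr fun x _ => by
      rw [(hasDerivAt_partialSnd (hdiff (x, s))).deriv.symm,
        (hasDerivAt_partialFst (hdiff (x, s))).deriv.symm]; rfl) (henergy s hs.1 hs.2)
  have hM : 0 ≤ M := (energy_nonneg h₂ ℓ).trans (hE ℓ ⟨le_rfl, by linarith⟩)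
  have hdirect := direct_inequality hreg h₂ (by linarith) hwave hut hE
  have hlocal : ∫ s in (t - ℓ)..(t + ℓ), ∂₁ U (ℓ, s) ^ 2 ≤ ∫ s in ℓ..(T - ℓ), ∂₁ U (ℓ, s) ^ 2 :=
    intervalIntegral.integral_mono_interval (by linarith) (by linarith) (by linarith)
      (Filter.Eventually.of_forall fun _ => sq_nonneg _)
      (Continuous.intervalIntegrable (by fun_prop) _ _)
  have htrace : δ₀ ^ 2 ≤ ℓ / 2 * ∫ s in (t - ℓ)..(t + ℓ), ∂₁ U (ℓ, s) ^ 2 := by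
    refine (pow_le_pow_left₀ hδ₀.le hbig 2).trans ?_
    rw [sq_abs]
    refine sq_le_of_eq_neg_half_integral (by fun_prop) hℓ.le (hdalembert.trans ?_)
    exact congrArg _ <| intervalIntegral.integral_congr fun s _ =>
      (hasDerivAt_partialFst (hdiff (ℓ, s))).deriv
  rw [le_div_iff₀ (by positivity)]
  calc (L - ℓ) * δ₀ ^ 2 ≤ ℓ / 2 * ((L - ℓ) * ∫ s in ℓ..(T - ℓ), ∂₁ U (ℓ, s) ^ 2) := by
        have := mul_le_mul_of_nonneg_left (htrace.trans
          (mul_le_mul_of_nonneg_left hlocal (by positivity))) (sub_nonneg.2 h₂)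
        linarith
    _ ≤ ℓ / 2 * ((T - ℓ - ℓ) * M + 2 * (L - ℓ) * M) := by gcongr
    _ = ℓ / 2 * (T - 4 * ℓ + 2 * L) * M := by ring
    _ ≤ ℓ₁ / 2 * (T + 2 * ℓ₁ - 4 * ℓ₀) * M := by
        gcongr <;> linarith

/-- Quantitative core of Theorem 3.4 for the wave equation: if `u = u^L` solves the
wave equation on `(ℓ,L) × (ℓ,T-ℓ)` with zero Dirichlet data at `x = ℓ, L`, has energy
bounded by `M`, and at some time `t ∈ [2ℓ, T-2ℓ]` the d'Alembert trace
`u(0,t) = -(1/2)∫_{t-ℓ}^{t+ℓ} u_x(ℓ,s) ds` satisfies `|u(0,t)| ≥ δ₀ > 0`, then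
`L - ℓ ≤ (ℓ₁/2)(T + 2ℓ₁ - 4ℓ₀) M / δ₀²`. -/
theorem stmt_13 (ℓ₀ ℓ L ℓ₁ T M δ₀ : ℝ)
    (h₀ : 0 < ℓ₀) (h₁ : ℓ₀ ≤ ℓ) (h₂ : ℓ ≤ L) (h₃ : L ≤ ℓ₁) (hT : 4 * ℓ₁ < T)
    (hδ₀ : 0 < δ₀)
    (u : ℝ → ℝ → ℝ) (hreg : ContDiff ℝ 2 (Function.uncurry u))
    (heq : ∀ x t : ℝ, ℓ < x → x < L → ℓ < t → t < T - ℓ →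
      deriv (fun τ => deriv (fun τ' => u x τ') τ) t =
      deriv (fun y => deriv (fun y' => u y' t) y) x)
    (hbc : ∀ t : ℝ, ℓ < t → t < T - ℓ → u ℓ t = 0 ∧ u L t = 0)
    (henergy : ∀ t : ℝ, ℓ ≤ t → t ≤ T - ℓ →
      (∫ x in ℓ..L,
        ((deriv (fun τ => u x τ) t) ^ 2 + (deriv (fun y => u y t) x) ^ 2)) ≤ M)
    (t : ℝ) (ht₁ : 2 * ℓ ≤ t) (ht₂ : t ≤ T - 2 * ℓ)
    (hdalembert : u 0 t =
      -(1 / 2) * ∫ s in (t - ℓ)..(t + ℓ), deriv (fun y => u y s) ℓ)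
    (hbig : δ₀ ≤ |u 0 t|) :
    L - ℓ ≤ ℓ₁ / 2 * (T + 2 * ℓ₁ - 4 * ℓ₀) * M / δ₀ ^ 2 :=
  stmt_13_general ℓ₀ ℓ L ℓ₁ T M δ₀ h₀ h₁ h₂ h₃ hδ₀ u hreg heq hbc henergy t ht₁ ht₂ hdalembert hbig
end

section
/- Let a < b and suppose f : ℂ \ S → ℂ is defined by f(z) = Σₙ aₙ/(z + λₙ), where (λₙ) is a strictly increasing sequence of positive reals, S = {-λₙ : n ∈ ℕ}, and Σ|aₙ|/λₙ < ∞. If f is holomorphic near -λ_{n₀} (i.e., -λ_{n₀} is a removable singularity because the series also equals another such series Σₙ bₙ/(z+μₙ) with -λ_{n₀} ∉ {-μₙ}), then the residue a_{n₀} of f at -λ_{n₀} is 0. -/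
/-!
Along the vertical ray `z = -λ_{n₀} + t i`, `t → 0⁺`, multiply both series by `z + λ_{n₀} = t i`.
Each term becomes `cₙ · t i / (t i + νₙ - λ_{n₀})`, which has modulus at most `1` and, for large `νₙ`,
at most `2 / νₙ`; so `Σ |cₙ| / νₙ < ∞` gives dominated convergence, and the limit is the sum of the
coefficients of the poles at `-λ_{n₀}`: `a_{n₀}` on the left, nothing on the right.
-/

open Complex Filter Topology

lemma norm_ofReal_mul_I_div_add_ofReal_le_one (t d : ℝ) : ‖t * I / (t * I + d)‖ ≤ 1 := by
  rw [norm_div]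
  refine div_le_one_of_le₀ ?_ (norm_nonneg _)
  simpa using abs_im_le_norm ((t : ℂ) * I + d)

lemma norm_ofReal_mul_I_div_add_ofReal_le {d : ℝ} (hd : d ≠ 0) (t : ℝ) :
    ‖t * I / (t * I + d)‖ ≤ |t| / |d| := by
  rw [norm_div, norm_mul, norm_I, mul_one, norm_real, Real.norm_eq_abs]
  refine div_le_div_of_nonneg_left (abs_nonneg t) (abs_pos.mpr hd) ?_
  simpa using abs_re_le_norm ((t : ℂ) * I + d)

lemma norm_ofReal_mul_I_div_add_sub_le {ν : ℝ} (hν : 0 < ν) (x : ℝ) {t : ℝ} (ht : t ∈ Set.Ioc 0 1) :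
    ‖t * I / (t * I + (ν - x : ℝ))‖ ≤ (2 * |x| + 2) / ν := by
  rcases le_or_gt ν (2 * |x|) with hsmall | hlarge
  · calc _ ≤ 1 := norm_ofReal_mul_I_div_add_ofReal_le_one _ _
      _ ≤ (2 * |x| + 2) / ν := by rw [one_le_div hν]; linarith
  · have hgap : ν / 2 < ν - x := by linarith [le_abs_self x]
    calc _ ≤ |t| / |ν - x| := norm_ofReal_mul_I_div_add_ofReal_le (by linarith) _
      _ ≤ 1 / (ν / 2) := by
        rw [abs_of_pos ht.1, abs_of_pos (by linarith)]
        exact div_le_div₀ zero_le_one ht.2 (by positivity) hgap.le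
      _ ≤ (2 * |x| + 2) / ν := by
        rw [one_div_div]; gcongr; linarith [abs_nonneg x]

lemma tendsto_ofReal_mul_I_div_add_ofReal (d : ℝ) :
    Tendsto (fun t : ℝ => t * I / (t * I + d)) (𝓝[>] 0) (𝓝 (if d = 0 then 1 else 0)) := by
  split_ifs with hd
  · refine tendsto_const_nhds.congr' ?_
    filter_upwards [self_mem_nhdsWithin] with t (ht : 0 < t)
    rw [hd, ofReal_zero, add_zero, div_self (by simp [ht.ne'])]
  · have hcont : ContinuousAt (fun t : ℝ => t * I / (t * I + d)) 0 :=
      ((continuous_ofReal.mul continuous_const).continuousAt).div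
        ((continuous_ofReal.mul continuous_const).add continuous_const).continuousAt
        (by simpa using hd)
    simpa using hcont.tendsto.mono_left nhdsWithin_le_nhds

/-- With `z = -x + t i`, this is `(z + x) ∑ cₙ / (z + νₙ)` tending to the residue at `-x`. -/
theorem tendsto_ofReal_mul_I_mul_tsum_div_add {c : ℕ → ℂ} {ν : ℕ → ℝ} (hν : ∀ n, 0 < ν n)
    (hc : Summable fun n => ‖c n‖ / ν n) (x : ℝ) :
    Tendsto (fun t : ℝ => t * I * ∑' n, c n / (-x + t * I + ν n)) (𝓝[>] 0)
      (𝓝 (∑' n, if ν n = x then c n else 0)) := by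
  have hterm : ∀ (t : ℝ) n, t * I * (c n / (-x + t * I + ν n)) =
      c n * (t * I / (t * I + (ν n - x : ℝ))) := by
    intro t n; push_cast; ring
  simp_rw [← tsum_mul_left, hterm]
  refine tendsto_tsum_of_dominated_convergence (hc.mul_left (2 * |x| + 2)) (fun n => ?_) ?_
  · have := (tendsto_ofReal_mul_I_div_add_ofReal (ν n - x)).const_mul (c n)
    simpa [sub_eq_zero] using this
  · filter_upwards [Ioc_mem_nhdsGT zero_lt_one] with t ht n
    calc ‖c n * (t * I / (t * I + (ν n - x : ℝ)))‖ ≤ ‖c n‖ * ((2 * |x| + 2) / ν n) := by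
          rw [norm_mul]; gcongr; exact norm_ofReal_mul_I_div_add_sub_le (hν n) x ht
      _ = (2 * |x| + 2) * (‖c n‖ / ν n) := by ring

theorem stmt_19_general (a b : ℕ → ℂ) (lam mu : ℕ → ℝ)
    (hlam_mono : StrictMono lam) (hlam_pos : ∀ n, 0 < lam n)
    (hmu_pos : ∀ n, 0 < mu n)
    (ha : Summable (fun n => ‖a n‖ / lam n))
    (hb : Summable (fun n => ‖b n‖ / mu n))
    (heq : ∀ z : ℂ, (∀ n, z ≠ -(lam n : ℂ)) → (∀ n, z ≠ -(mu n : ℂ)) →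
      (∑' n : ℕ, a n / (z + (lam n : ℂ))) = ∑' n : ℕ, b n / (z + (mu n : ℂ)))
    (n₀ : ℕ) (hpole : ∀ n, lam n₀ ≠ mu n) :
    a n₀ = 0 := by
  have hA := tendsto_ofReal_mul_I_mul_tsum_div_add hlam_pos ha (lam n₀)
  have hB := tendsto_ofReal_mul_I_mul_tsum_div_add hmu_pos hb (lam n₀)
  rw [tsum_eq_single n₀ fun n hn => if_neg (hlam_mono.injective.ne hn), if_pos rfl] at hA
  simp only [fun n => (hpole n).symm, if_false, tsum_zero] at hB
  refine tendsto_nhds_unique hA (hB.congr' ?_)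
  filter_upwards [self_mem_nhdsWithin] with t (ht : 0 < t)
  have hoff_real : ∀ r : ℝ, -(lam n₀ : ℂ) + t * I ≠ -(r : ℂ) := fun r h => by
    simpa [ht.ne'] using congrArg im h
  rw [heq _ (fun n => hoff_real _) (fun n => hoff_real _)]

/-- Residue argument (analytic heart of Proposition 2.2): suppose
`f(z) = Σₙ aₙ/(z + λₙ) = Σₙ bₙ/(z + μₙ)` outside the poles, where `(λₙ)`, `(μₙ)` are
strictly increasing sequences of positive reals and `Σ |aₙ|/λₙ`, `Σ |bₙ|/μₙ` converge.
If `-λ_{n₀}` is not among the poles `{-μₙ}`, then the residue `a_{n₀}` vanishes. -/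
theorem stmt_19 (a b : ℕ → ℂ) (lam mu : ℕ → ℝ)
    (hlam_mono : StrictMono lam) (hlam_pos : ∀ n, 0 < lam n)
    (hmu_mono : StrictMono mu) (hmu_pos : ∀ n, 0 < mu n)
    (ha : Summable (fun n => ‖a n‖ / lam n))
    (hb : Summable (fun n => ‖b n‖ / mu n))
    (heq : ∀ z : ℂ, (∀ n, z ≠ -(lam n : ℂ)) → (∀ n, z ≠ -(mu n : ℂ)) →
      (∑' n : ℕ, a n / (z + (lam n : ℂ))) = ∑' n : ℕ, b n / (z + (mu n : ℂ)))
    (n₀ : ℕ) (hpole : ∀ n, lam n₀ ≠ mu n) :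
    a n₀ = 0 :=
  stmt_19_general a b lam mu hlam_mono hlam_pos hmu_pos ha hb heq n₀ hpole
end
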